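/- Let ρ > 0, ν ∈ ℝ with cos(πν) ≠ 0, and let r' ∈ EuclideanSpace ℝ (Fin 3) be nonzero. Then ‖r‖ · G_ν(r, r') tends to −(√(‖r'‖² + ρ²)/(4π cos(πν) ‖r'‖)) · sin((ν + 1/2) · arccos((ρ² − ‖r'‖²)/(ρ² + ‖r'‖²))) as ‖r‖ → ∞ (i.e. along the cobounded filter on EuclideanSpace ℝ (Fin 3)). -/

import Mathlib

/-!
With `u = 1/‖r‖`, `v = ⟪r, r'⟫/‖r‖²` and `w = ‖r - r'‖/‖r‖`, dividing every factor of `G_ν(r, r')`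
by the appropriate power of `‖r‖` writes `‖r‖ · G_ν(r, r')` as a function of `(u, v, w)` that is
continuous at `(0, 0, 1)` once `r' ≠ 0`. As `‖r‖ → ∞` we have `(u, v, w) → (0, 0, 1)` by
Cauchy–Schwarz and the triangle inequality, and the value at `(0, 0, 1)` is the stated limit.
-/

/-- The three-dimensional Maxwell fish-eye Green's function. -/
noncomputable def fisheyeGreen (ρ ν : ℝ) (r r' : EuclideanSpace ℝ (Fin 3)) : ℝ :=
  -(1 / (4 * Real.pi * Real.cos (Real.pi * ν)))
    * (Real.sqrt ((‖r‖ ^ 2 + ρ ^ 2) * (‖r'‖ ^ 2 + ρ ^ 2))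
        / (‖r - r'‖
            * Real.sqrt (‖r‖ ^ 2 * ‖r'‖ ^ 2 + 2 * ρ ^ 2 * (inner ℝ r r' : ℝ) + ρ ^ 4)))
    * Real.sin ((ν + 1 / 2)
        * Real.arccos (-1 + 2 * ρ ^ 2 * ‖r - r'‖ ^ 2
            / ((‖r‖ ^ 2 + ρ ^ 2) * (‖r'‖ ^ 2 + ρ ^ 2))))

open Real Filter Topology Bornology
open scoped RealInnerProductSpace

section Cobounded

variable {E : Type*}

theorem tendsto_inv_norm_cobounded [SeminormedAddCommGroup E] :
    Tendsto (fun x : E => ‖x‖⁻¹) (cobounded E) (𝓝 0) :=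
  tendsto_inv_atTop_zero.comp tendsto_norm_cobounded_atTop

theorem tendsto_norm_sub_div_norm_cobounded [SeminormedAddCommGroup E] (a : E) :
    Tendsto (fun x => ‖x - a‖ / ‖x‖) (cobounded E) (𝓝 1) := by
  have h : Tendsto (fun x => ‖x - a‖ / ‖x‖ - 1) (cobounded E) (𝓝 0) := by
    refine squeeze_zero_norm' ?_ (by simpa using tendsto_inv_norm_cobounded.const_mul ‖a‖)
    filter_upwards [tendsto_norm_cobounded_atTop.eventually_gt_atTop 0] with x hx
    rw [div_sub_one hx.ne', norm_div, norm_norm, div_le_iff₀ hx, mul_assoc, inv_mul_cancel₀ hx.ne',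
      mul_one, Real.norm_eq_abs]
    simpa using abs_norm_sub_norm_le (x - a) x
  simpa using h.add_const 1

theorem tendsto_inner_div_norm_sq_cobounded [NormedAddCommGroup E] [InnerProductSpace ℝ E] (a : E) :
    Tendsto (fun x => ⟪x, a⟫ / ‖x‖ ^ 2) (cobounded E) (𝓝 0) := by
  refine squeeze_zero_norm' ?_ (by simpa using tendsto_inv_norm_cobounded.const_mul ‖a‖)
  filter_upwards [tendsto_norm_cobounded_atTop.eventually_gt_atTop 0] with x hx
  rw [norm_div, norm_pow, norm_norm, Real.norm_eq_abs, div_le_iff₀ (by positivity)]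
  calc |⟪x, a⟫| ≤ ‖x‖ * ‖a‖ := abs_real_inner_le_norm x a
    _ = ‖a‖ * ‖x‖⁻¹ * ‖x‖ ^ 2 := by field_simp

end Cobounded

noncomputable def fisheyeGreenRescaled (ρ ν k u v w : ℝ) : ℝ :=
  -(1 / (4 * π * cos (π * ν)))
    * (√((1 + ρ ^ 2 * u ^ 2) * (k ^ 2 + ρ ^ 2)) / (w * √(k ^ 2 + 2 * ρ ^ 2 * v + ρ ^ 4 * u ^ 2)))
    * sin ((ν + 1 / 2) * arccos (-1 + 2 * ρ ^ 2 * w ^ 2 / ((1 + ρ ^ 2 * u ^ 2) * (k ^ 2 + ρ ^ 2))))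

theorem tendsto_fisheyeGreenRescaled {α : Type*} {l : Filter α} {u v w : α → ℝ} (ρ ν : ℝ) {k : ℝ}
    (hk : k ≠ 0) (hu : Tendsto u l (𝓝 0)) (hv : Tendsto v l (𝓝 0)) (hw : Tendsto w l (𝓝 1)) :
    Tendsto (fun x => fisheyeGreenRescaled ρ ν k (u x) (v x) (w x)) l
      (𝓝 (fisheyeGreenRescaled ρ ν k 0 0 1)) := by
  have hA : Tendsto (fun x => (1 + ρ ^ 2 * u x ^ 2) * (k ^ 2 + ρ ^ 2)) l
      (𝓝 ((1 + ρ ^ 2 * 0 ^ 2) * (k ^ 2 + ρ ^ 2))) :=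
    (((hu.pow 2).const_mul _).const_add 1).mul_const _
  have hD : Tendsto (fun x => w x * √(k ^ 2 + 2 * ρ ^ 2 * v x + ρ ^ 4 * u x ^ 2)) l
      (𝓝 (1 * √(k ^ 2 + 2 * ρ ^ 2 * 0 + ρ ^ 4 * 0 ^ 2))) :=
    hw.mul ((((hv.const_mul _).const_add _).add ((hu.pow 2).const_mul _)).sqrt)
  have hA0 : (1 + ρ ^ 2 * 0 ^ 2) * (k ^ 2 + ρ ^ 2) ≠ 0 := by positivity
  have hD0 : 1 * √(k ^ 2 + 2 * ρ ^ 2 * 0 + ρ ^ 4 * 0 ^ 2) ≠ 0 := by simp [sqrt_sq_eq_abs, hk]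
  exact (tendsto_const_nhds.mul (hA.sqrt.div hD hD0)).mul
    ((continuous_sin.tendsto _).comp
      (((((hw.pow 2).const_mul _).div hA hA0).const_add (-1)).arccos.const_mul _))

theorem fisheyeGreenRescaled_zero_zero_one (ρ ν : ℝ) {k : ℝ} (hk : 0 < k) :
    fisheyeGreenRescaled ρ ν k 0 0 1 = -(√(k ^ 2 + ρ ^ 2) / (4 * π * cos (π * ν) * k))
      * sin ((ν + 1 / 2) * arccos ((ρ ^ 2 - k ^ 2) / (ρ ^ 2 + k ^ 2))) := by
  have harg : -1 + 2 * ρ ^ 2 * 1 ^ 2 / ((1 + ρ ^ 2 * 0 ^ 2) * (k ^ 2 + ρ ^ 2))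
      = (ρ ^ 2 - k ^ 2) / (ρ ^ 2 + k ^ 2) := by
    field_simp
    ring
  rw [fisheyeGreenRescaled, harg]
  simp only [ne_eq, OfNat.ofNat_ne_zero, not_false_eq_true, zero_pow, mul_zero, add_zero, one_mul,
    sqrt_sq hk.le]
  ring

theorem norm_mul_fisheyeGreen_eq (ρ ν : ℝ) {r : EuclideanSpace ℝ (Fin 3)} (hr : r ≠ 0)
    (r' : EuclideanSpace ℝ (Fin 3)) :
    ‖r‖ * fisheyeGreen ρ ν r r' =
      fisheyeGreenRescaled ρ ν ‖r'‖ ‖r‖⁻¹ (⟪r, r'⟫ / ‖r‖ ^ 2) (‖r - r'‖ / ‖r‖) := by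
  have hR : ‖r‖ ≠ 0 := norm_ne_zero_iff.mpr hr
  have hA : (1 + ρ ^ 2 * ‖r‖⁻¹ ^ 2) * (‖r'‖ ^ 2 + ρ ^ 2)
      = (‖r‖ ^ 2 + ρ ^ 2) * (‖r'‖ ^ 2 + ρ ^ 2) / ‖r‖ ^ 2 := by
    field_simp
  have hD : ‖r'‖ ^ 2 + 2 * ρ ^ 2 * (⟪r, r'⟫ / ‖r‖ ^ 2) + ρ ^ 4 * ‖r‖⁻¹ ^ 2
      = (‖r‖ ^ 2 * ‖r'‖ ^ 2 + 2 * ρ ^ 2 * ⟪r, r'⟫ + ρ ^ 4) / ‖r‖ ^ 2 := by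
    field_simp
  have harg : 2 * ρ ^ 2 * (‖r - r'‖ / ‖r‖) ^ 2 / ((‖r‖ ^ 2 + ρ ^ 2) * (‖r'‖ ^ 2 + ρ ^ 2) / ‖r‖ ^ 2)
      = 2 * ρ ^ 2 * ‖r - r'‖ ^ 2 / ((‖r‖ ^ 2 + ρ ^ 2) * (‖r'‖ ^ 2 + ρ ^ 2)) := by
    rw [div_pow, mul_div_assoc', div_div_div_cancel_right₀ (by positivity)]
  rw [fisheyeGreenRescaled, hA, hD, harg, sqrt_div' _ (by positivity), sqrt_div' _ (by positivity),
    sqrt_sq (norm_nonneg r), fisheyeGreen]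
  field_simp

theorem fisheye_green_decay_at_infinity_general
    (ρ ν : ℝ)
    (r' : EuclideanSpace ℝ (Fin 3)) (hr' : r' ≠ 0) :
    Filter.Tendsto (fun r => ‖r‖ * fisheyeGreen ρ ν r r')
      (Bornology.cobounded (EuclideanSpace ℝ (Fin 3)))
      (nhds (-(Real.sqrt (‖r'‖ ^ 2 + ρ ^ 2)
              / (4 * Real.pi * Real.cos (Real.pi * ν) * ‖r'‖))
            * Real.sin ((ν + 1 / 2)
                * Real.arccos ((ρ ^ 2 - ‖r'‖ ^ 2) / (ρ ^ 2 + ‖r'‖ ^ 2))))) := by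
  have hk : 0 < ‖r'‖ := norm_pos_iff.mpr hr'
  rw [← fisheyeGreenRescaled_zero_zero_one ρ ν hk]
  refine (tendsto_fisheyeGreenRescaled ρ ν hk.ne' tendsto_inv_norm_cobounded
    (tendsto_inner_div_norm_sq_cobounded r') (tendsto_norm_sub_div_norm_cobounded r')).congr' ?_
  filter_upwards [eventually_ne_cobounded 0] with r hr
  exact (norm_mul_fisheyeGreen_eq ρ ν hr r').symm

theorem fisheye_green_decay_at_infinity
    (ρ ν : ℝ) (hρ : 0 < ρ) (hν : Real.cos (Real.pi * ν) ≠ 0)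
    (r' : EuclideanSpace ℝ (Fin 3)) (hr' : r' ≠ 0) :
    Filter.Tendsto (fun r => ‖r‖ * fisheyeGreen ρ ν r r')
      (Bornology.cobounded (EuclideanSpace ℝ (Fin 3)))
      (nhds (-(Real.sqrt (‖r'‖ ^ 2 + ρ ^ 2)
              / (4 * Real.pi * Real.cos (Real.pi * ν) * ‖r'‖))
            * Real.sin ((ν + 1 / 2)
                * Real.arccos ((ρ ^ 2 - ‖r'‖ ^ 2) / (ρ ^ 2 + ‖r'‖ ^ 2))))) :=
  fisheye_green_decay_at_infinity_general ρ ν r' hr'
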